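/- In a trace model where events are reads, writes, syncs, write-backs, and crashes on a single page, if Algorithm 1 is followed (write-back writes the page to disk and sets latest_dev := DISK; sync on a dirty page writes the page to NVM and sets latest_dev := NVM; recovery reads the page from the device named by latest_dev), then for every subsequence (write w, sync, crash, read r) in the trace with no crash between w and r, the value returned by r after recovery contains the data written by w (i.e., the recovered version is no earlier than w). -/

import Mathlib

/- Whole-page model of Algorithm 1: single page with version numbers,
   state = (cache, disk, nvm, dirty, latest_dev). -/

inductive Dev | disk | nvm
deriving DecidableEq

inductive Event
  | write (v : ℕ)   -- write a fresh version v to the cache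
  | sync
  | writeback
  | crash
  | read
deriving DecidableEq

structure St where
  cache : ℕ
  disk  : ℕ
  nvm   : ℕ
  dirty : Bool
  dev   : Dev

/-- The version held by the device named by `latest_dev`. -/
def deviceVal (s : St) : ℕ :=
  match s.dev with
  | .disk => s.disk
  | .nvm  => s.nvm

/-- Algorithm 1 transitions.  A crash erases the cache and recovery restores
    it from the device indicated by `latest_dev`. -/
def step (s : St) : Event → St
  | .write v   => { s with cache := v, dirty := true }
  | .writeback => { s with disk := s.cache, dirty := false, dev := .disk }
  | .sync      => if s.dirty then { s with nvm := s.cache, dirty := false, dev := .nvm } else s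
  | .crash     => { s with cache := deviceVal s }
  | .read      => s

def run (s : St) (tr : List Event) : St := tr.foldl step s

/-!
Between `write v` and the sync no crash occurs, so the cache stays `≥ v` and, whenever the page
is clean, the device named by `latest_dev` is `≥ v` too: whatever cleaned the page copied the
cache there (`Pending`). The sync therefore leaves both the cache and that device `≥ v`
(`Durable`), and this is preserved by every later event, crashes included, because a crash
restores the cache from exactly that device.
-/

def Pending (v : ℕ) (s : St) : Prop := v ≤ s.cache ∧ (s.dirty = true ∨ v ≤ deviceVal s)

def Durable (v : ℕ) (s : St) : Prop := v ≤ s.cache ∧ v ≤ deviceVal s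

theorem run_append (s : St) (a b : List Event) : run s (a ++ b) = run (run s a) b :=
  List.foldl_append

theorem run_singleton (s : St) (e : Event) : run s [e] = step s e := rfl

theorem run_induction {P : St → Prop} {s : St} {t : List Event}
    (hstep : ∀ s, ∀ e ∈ t, P s → P (step s e)) (hs : P s) : P (run s t) := by
  induction t generalizing s with
  | nil => exact hs
  | cons e t ih =>
    exact ih (fun s' e' he' => hstep s' e' (List.mem_cons_of_mem e he'))
      (hstep s e List.mem_cons_self hs)

theorem cache_step_sync (s : St) : (step s .sync).cache = s.cache := by
  simp only [step]; split <;> rfl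

theorem deviceVal_step_sync_of_dirty {s : St} (hd : s.dirty = true) :
    deviceVal (step s .sync) = s.cache := by
  simp [step, hd, deviceVal]

theorem step_sync_of_not_dirty {s : St} (hd : s.dirty = false) : step s .sync = s := by
  simp [step, hd]

theorem pending_step_write (s : St) (v : ℕ) : Pending v (step s (.write v)) :=
  ⟨le_rfl, .inl rfl⟩

section

variable {v : ℕ} {s : St}

theorem durable_step_sync_of_pending (h : Pending v s) : Durable v (step s .sync) := by
  obtain ⟨hcache, hdev⟩ := h
  cases hd : s.dirty
  · rw [step_sync_of_not_dirty hd]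
    exact ⟨hcache, hdev.resolve_left (by simp [hd])⟩
  · rw [Durable, deviceVal_step_sync_of_dirty hd, cache_step_sync]
    exact ⟨hcache, hcache⟩

theorem pending_step {e : Event} (h : Pending v s) (he : e ≠ .crash)
    (hw : ∀ u, e = .write u → v ≤ u) : Pending v (step s e) := by
  obtain ⟨hcache, hdev⟩ := h
  cases e with
  | write u => exact ⟨hw u rfl, .inl rfl⟩
  | writeback => exact ⟨hcache, .inr hcache⟩
  | sync =>
    obtain ⟨hcache', hdev'⟩ := durable_step_sync_of_pending ⟨hcache, hdev⟩
    exact ⟨hcache', .inr hdev'⟩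
  | crash => exact absurd rfl he
  | read => exact ⟨hcache, hdev⟩

theorem pending_run {t : List Event} (h : Pending v s) (hc : Event.crash ∉ t)
    (hw : ∀ e ∈ t, ∀ u, e = .write u → v ≤ u) : Pending v (run s t) :=
  run_induction (fun _ e he h' => pending_step h' (ne_of_mem_of_not_mem he hc) (hw e he)) h

theorem durable_step {e : Event} (h : Durable v s) (hw : ∀ u, e = .write u → v ≤ u) :
    Durable v (step s e) := by
  obtain ⟨hcache, hdev⟩ := h
  cases e with
  | write u => exact ⟨hw u rfl, hdev⟩
  | writeback => exact ⟨hcache, hcache⟩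
  | sync => exact durable_step_sync_of_pending ⟨hcache, .inr hdev⟩
  | crash => exact ⟨hdev, hdev⟩
  | read => exact ⟨hcache, hdev⟩

theorem durable_run {t : List Event} (h : Durable v s)
    (hw : ∀ e ∈ t, ∀ u, e = .write u → v ≤ u) : Durable v (run s t) :=
  run_induction (fun _ e he h' => durable_step h' (hw e he)) h

end

theorem algorithm1_sync_semantics_general (s₀ : St) (v : ℕ) (t₁ t₂ t₃ t₄ : List Event)
    (hmono : ∀ e ∈ t₂ ++ t₃ ++ t₄, ∀ u, e = Event.write u → v ≤ u)
    (hc₂ : Event.crash ∉ t₂) :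
    v ≤ (run s₀ (t₁ ++ [Event.write v] ++ t₂ ++ [Event.sync] ++ t₃ ++
          [Event.crash] ++ t₄)).cache := by
  simp only [run_append, run_singleton]
  have hpending := pending_run (t := t₂) (pending_step_write (run s₀ t₁) v) hc₂
    fun e he => hmono e (by simp [he])
  have hsynced := durable_run (t := t₃) (durable_step_sync_of_pending hpending)
    fun e he => hmono e (by simp [he])
  have hrecovered := durable_run (t := t₄) (durable_step (e := .crash) hsynced nofun)
    fun e he => hmono e (by simp [he])
  exact hrecovered.1

/-- If Algorithm 1 is followed, then for every subsequence
    (write v, sync, crash, read) in the trace with no other crash between the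
    write and the read, the value returned by the read after recovery is a
    version no earlier than v (writes after `write v` have fresh versions ≥ v). -/
theorem algorithm1_sync_semantics (s₀ : St) (v : ℕ) (t₁ t₂ t₃ t₄ : List Event)
    (hmono : ∀ e ∈ t₂ ++ t₃ ++ t₄, ∀ u, e = Event.write u → v ≤ u)
    (hc₂ : Event.crash ∉ t₂) (hc₃ : Event.crash ∉ t₃) (hc₄ : Event.crash ∉ t₄) :
    v ≤ (run s₀ (t₁ ++ [Event.write v] ++ t₂ ++ [Event.sync] ++ t₃ ++
          [Event.crash] ++ t₄)).cache :=
  algorithm1_sync_semantics_general s₀ v t₁ t₂ t₃ t₄ hmono hc₂
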